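/- Under Assumption 1 and along the BLUR iterates, if for a given positive integer T the step size is chosen as η = (2/C₁)·√(C/L_f)·T^{−1/2}, then (1/T)·Σ_{t=0}^{T−1} ‖∇f(θ(t))‖² ≤ 2·(C₁/γ)·√(L_f·C)·T^{−1/2}. -/

import Mathlib

open scoped RealInnerProductSpace

/-- Descent lemma: if the gradient of `f` is `L`-Lipschitz then
`f (x + v) ≤ f x + ⟪∇f x, v⟫ + L/2 ‖v‖²`. -/
lemma blur_descent {d : ℕ} (f : EuclideanSpace ℝ (Fin d) → ℝ)
    (hf : Differentiable ℝ f) (L : ℝ)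
    (hlip : ∀ x y : EuclideanSpace ℝ (Fin d),
      ‖gradient f x - gradient f y‖ ≤ L * ‖x - y‖)
    (x v : EuclideanSpace ℝ (Fin d)) :
    f (x + v) ≤ f x + ⟪gradient f x, v⟫ + L / 2 * ‖v‖ ^ 2 := by
  set g : ℝ → ℝ := fun t => f (x + t • v) -
      (f x + t * ⟪gradient f x, v⟫ + L / 2 * ‖v‖ ^ 2 * t ^ 2) with hg
  have hcurve : ∀ t : ℝ, HasDerivAt (fun s : ℝ => f (x + s • v))
      ⟪gradient f (x + t • v), v⟫ t := by
    intro t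
    have h1 : HasDerivAt (fun s : ℝ => x + s • v) v t := by
      simpa using ((hasDerivAt_id t).smul_const v).const_add x
    have h2 := ((hf (x + t • v)).hasGradientAt.hasFDerivAt).comp_hasDerivAt t h1
    simpa [InnerProductSpace.toDual_apply_apply, Function.comp_def] using h2
  have hgd : ∀ t : ℝ, HasDerivAt g
      (⟪gradient f (x + t • v), v⟫ -
        (⟪gradient f x, v⟫ + L / 2 * ‖v‖ ^ 2 * (2 * t))) t := by
    intro t
    have h3 : HasDerivAt (fun t : ℝ => f x + t * ⟪gradient f x, v⟫ +
        L / 2 * ‖v‖ ^ 2 * t ^ 2)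
        (⟪gradient f x, v⟫ + L / 2 * ‖v‖ ^ 2 * (2 * t)) t := by
      have ha : HasDerivAt (fun t : ℝ => t * ⟪gradient f x, v⟫) ⟪gradient f x, v⟫ t := by
        simpa using (hasDerivAt_id t).mul_const ⟪gradient f x, v⟫
      have hb : HasDerivAt (fun t : ℝ => L / 2 * ‖v‖ ^ 2 * t ^ 2)
          (L / 2 * ‖v‖ ^ 2 * (2 * t)) t := by
        simpa [mul_comm] using (hasDerivAt_pow 2 t).const_mul (L / 2 * ‖v‖ ^ 2)
      exact (ha.const_add (f x)).add hb
    exact (hcurve t).sub h3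
  have hanti : AntitoneOn g (Set.Icc 0 1) := by
    apply antitoneOn_of_deriv_nonpos (convex_Icc 0 1)
    · exact (fun t _ => ((hgd t).continuousAt.continuousWithinAt))
    · exact fun t _ => ((hgd t).differentiableAt.differentiableWithinAt)
    · intro t ht
      rw [interior_Icc] at ht
      rw [(hgd t).deriv]
      have hcs : ⟪gradient f (x + t • v) - gradient f x, v⟫ ≤ L * t * ‖v‖ ^ 2 := by
        calc ⟪gradient f (x + t • v) - gradient f x, v⟫
            ≤ ‖gradient f (x + t • v) - gradient f x‖ * ‖v‖ := real_inner_le_norm _ _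
          _ ≤ L * ‖(x + t • v) - x‖ * ‖v‖ := by
              gcongr; exact hlip _ _
          _ = L * t * ‖v‖ ^ 2 := by
              rw [add_sub_cancel_left, norm_smul, Real.norm_eq_abs,
                abs_of_pos ht.1]; ring
      have := inner_sub_left (𝕜 := ℝ) (gradient f (x + t • v)) (gradient f x) v
      nlinarith [this]
  have h01 := hanti (Set.left_mem_Icc.2 zero_le_one) (Set.right_mem_Icc.2 zero_le_one)
    zero_le_one
  simp only [hg, zero_smul, one_smul, add_zero, zero_mul, one_pow, mul_one,
    zero_pow] at h01
  nlinarith [h01]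

/-- The BLUR update direction
`u(θ) = γ·∇f(θ) + ∇r(θ) − (⟪∇f(θ), ∇r(θ)⟫/‖∇f(θ)‖²)·∇f(θ)`. -/
noncomputable def blurU {d : ℕ} (f r : EuclideanSpace ℝ (Fin d) → ℝ) (γ : ℝ)
    (θ : EuclideanSpace ℝ (Fin d)) : EuclideanSpace ℝ (Fin d) :=
  γ • gradient f θ + gradient r θ -
    (⟪gradient f θ, gradient r θ⟫ / ‖gradient f θ‖ ^ 2) • gradient f θ

/-- The inner product of the gradient with the BLUR direction. -/
lemma blur_inner {d : ℕ} (f r : EuclideanSpace ℝ (Fin d) → ℝ) (γ : ℝ)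
    (θ : EuclideanSpace ℝ (Fin d)) (h : gradient f θ ≠ 0) :
    ⟪gradient f θ, blurU f r γ θ⟫ = γ * ‖gradient f θ‖ ^ 2 := by
  have hn : ‖gradient f θ‖ ^ 2 ≠ 0 := by simpa using h
  simp only [blurU, inner_sub_right, inner_add_right, inner_smul_right,
    real_inner_self_eq_norm_sq]
  field_simp
  ring

/-- Norm bound for the BLUR direction. -/
lemma blur_norm_le {d : ℕ} (f r : EuclideanSpace ℝ (Fin d) → ℝ) (γ C : ℝ)
    (hγ : 0 < γ)
    (θ : EuclideanSpace ℝ (Fin d)) (h : gradient f θ ≠ 0)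
    (hgf : ‖gradient f θ‖ ≤ C) (hgr : ‖gradient r θ‖ ≤ C) :
    ‖blurU f r γ θ‖ ≤ (2 + γ) * C := by
  have hn : (0:ℝ) < ‖gradient f θ‖ := norm_pos_iff.2 h
  have h3 : ‖(⟪gradient f θ, gradient r θ⟫ / ‖gradient f θ‖ ^ 2) • gradient f θ‖
      ≤ ‖gradient r θ‖ := by
    rw [norm_smul, Real.norm_eq_abs, abs_div, abs_of_nonneg (by positivity :
      (0:ℝ) ≤ ‖gradient f θ‖ ^ 2)]
    have hcs := abs_real_inner_le_norm (gradient f θ) (gradient r θ)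
    rw [div_mul_eq_mul_div, div_le_iff₀ (by positivity)]
    calc |⟪gradient f θ, gradient r θ⟫| * ‖gradient f θ‖
        ≤ ‖gradient f θ‖ * ‖gradient r θ‖ * ‖gradient f θ‖ := by gcongr
      _ = ‖gradient r θ‖ * ‖gradient f θ‖ ^ 2 := by ring
  calc ‖blurU f r γ θ‖ ≤ ‖γ • gradient f θ + gradient r θ‖ +
        ‖(⟪gradient f θ, gradient r θ⟫ / ‖gradient f θ‖ ^ 2) • gradient f θ‖ :=
        norm_sub_le _ _
    _ ≤ (‖γ • gradient f θ‖ + ‖gradient r θ‖) + ‖gradient r θ‖ := by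
        gcongr; exact norm_add_le _ _
    _ ≤ (γ * C + C) + C := by
        have : ‖γ • gradient f θ‖ = γ * ‖gradient f θ‖ := by
          rw [norm_smul, Real.norm_eq_abs, abs_of_pos hγ]
        rw [this]; gcongr
    _ = (2 + γ) * C := by ring

/-- Rate `O(T^{-1/2})` from the Remark after Theorem 1: with the tuned step size
`η = (2/C₁)·√(C/L_f)·T^{-1/2}`,
`(1/T)·Σ_{t<T} ‖∇f(θ(t))‖² ≤ 2(C₁/γ)·√(L_f C)·T^{-1/2}`. -/
theorem blur_rate_forget_grad (d : ℕ) (hd : 0 < d) (f r : EuclideanSpace ℝ (Fin d) → ℝ)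
    (hf : Differentiable ℝ f) (hr : Differentiable ℝ r) (γ : ℝ) (hγ : 0 < γ)
    (Lf Lr : ℝ) (hLf : 0 < Lf) (hLr : 0 < Lr)
    (hlipf : ∀ x y : EuclideanSpace ℝ (Fin d),
      ‖gradient f x - gradient f y‖ ≤ Lf * ‖x - y‖)
    (hlipr : ∀ x y : EuclideanSpace ℝ (Fin d),
      ‖gradient r x - gradient r y‖ ≤ Lr * ‖x - y‖)
    (C : ℝ) (hC : 0 < C)
    (hfb : ∀ x, |f x| ≤ C) (hrb : ∀ x, |r x| ≤ C)
    (hgf : ∀ x, ‖gradient f x‖ ≤ C) (hgr : ∀ x, ‖gradient r x‖ ≤ C)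
    (η : ℝ)
    (θs : ℕ → EuclideanSpace ℝ (Fin d))
    (hne : ∀ t, gradient f (θs t) ≠ 0)
    (hstep : ∀ t, θs (t + 1) = θs t - η • blurU f r γ (θs t))
    (T : ℕ) (hT : 0 < T)
    (hηdef : η = 2 / ((2 + γ) * C) * Real.sqrt (C / Lf) / Real.sqrt (T : ℝ)) :
    (1 / (T : ℝ)) * ∑ t ∈ Finset.range T, ‖gradient f (θs t)‖ ^ 2 ≤
      2 * (((2 + γ) * C) / γ) * Real.sqrt (Lf * C) / Real.sqrt (T : ℝ) := by
  set C₁ : ℝ := (2 + γ) * C with hC₁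
  have hC₁pos : 0 < C₁ := by positivity
  set sT : ℝ := Real.sqrt (T : ℝ) with hsT
  set sC : ℝ := Real.sqrt C with hsC
  set sL : ℝ := Real.sqrt Lf with hsL
  have hTpos : (0:ℝ) < T := Nat.cast_pos.2 hT
  have hsTpos : 0 < sT := Real.sqrt_pos.2 hTpos
  have hsCpos : 0 < sC := Real.sqrt_pos.2 hC
  have hsLpos : 0 < sL := Real.sqrt_pos.2 hLf
  have hsT2 : sT ^ 2 = (T : ℝ) := Real.sq_sqrt hTpos.le
  have hsC2 : sC ^ 2 = C := Real.sq_sqrt hC.le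
  have hsL2 : sL ^ 2 = Lf := Real.sq_sqrt hLf.le
  have hη : η = 2 / C₁ * (sC / sL) / sT := by
    rw [hηdef, Real.sqrt_div hC.le]
  have hηpos : 0 < η := by rw [hη]; positivity
  -- per-step descent inequality
  have hstep' : ∀ t, η * γ * ‖gradient f (θs t)‖ ^ 2 ≤
      f (θs t) - f (θs (t + 1)) + Lf / 2 * (η ^ 2 * C₁ ^ 2) := by
    intro t
    have hdesc := blur_descent f hf Lf hlipf (θs t) (-(η • blurU f r γ (θs t)))
    have hθ : θs (t + 1) = θs t + -(η • blurU f r γ (θs t)) := by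
      rw [hstep t]; abel
    rw [← hθ] at hdesc
    have hin : ⟪gradient f (θs t), -(η • blurU f r γ (θs t))⟫ =
        -(η * (γ * ‖gradient f (θs t)‖ ^ 2)) := by
      rw [inner_neg_right, real_inner_smul_right, blur_inner f r γ _ (hne t)]
    rw [hin] at hdesc
    have hnu : ‖blurU f r γ (θs t)‖ ≤ C₁ :=
      blur_norm_le f r γ C hγ _ (hne t) (hgf _) (hgr _)
    have hnv : ‖-(η • blurU f r γ (θs t))‖ ^ 2 ≤ η ^ 2 * C₁ ^ 2 := by
      rw [norm_neg, norm_smul, Real.norm_eq_abs, abs_of_pos hηpos, mul_pow]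
      gcongr
    nlinarith [hdesc, hnv, hLf]
  set S : ℝ := ∑ t ∈ Finset.range T, ‖gradient f (θs t)‖ ^ 2 with hS
  have hsum : η * γ * S ≤ 2 * C + (T : ℝ) * (Lf / 2 * (η ^ 2 * C₁ ^ 2)) := by
    have h1 : η * γ * S = ∑ t ∈ Finset.range T, η * γ * ‖gradient f (θs t)‖ ^ 2 := by
      rw [hS, Finset.mul_sum]
    rw [h1]
    calc ∑ t ∈ Finset.range T, η * γ * ‖gradient f (θs t)‖ ^ 2
        ≤ ∑ t ∈ Finset.range T,
            (f (θs t) - f (θs (t + 1)) + Lf / 2 * (η ^ 2 * C₁ ^ 2)) :=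
          Finset.sum_le_sum fun t _ => hstep' t
      _ = (f (θs 0) - f (θs T)) + (T : ℝ) * (Lf / 2 * (η ^ 2 * C₁ ^ 2)) := by
          rw [Finset.sum_add_distrib, Finset.sum_range_sub' (fun i => f (θs i)),
            Finset.sum_const, Finset.card_range, nsmul_eq_mul]
      _ ≤ 2 * C + (T : ℝ) * (Lf / 2 * (η ^ 2 * C₁ ^ 2)) := by
          have h0 := abs_le.1 (hfb (θs 0))
          have hT' := abs_le.1 (hfb (θs T))
          linarith [h0.1, h0.2, hT'.1, hT'.2]
  have hkey : S ≤ 2 * (C₁ / γ) * (sL * sC) * sT := by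
    rw [← mul_le_mul_iff_right₀ (mul_pos hηpos hγ)]
    calc η * γ * S ≤ 2 * C + (T : ℝ) * (Lf / 2 * (η ^ 2 * C₁ ^ 2)) := hsum
      _ = η * γ * (2 * (C₁ / γ) * (sL * sC) * sT) := by
          rw [hη, ← hsT2, ← hsC2, ← hsL2]
          field_simp
          ring
  have hsqrtLC : Real.sqrt (Lf * C) = sL * sC := Real.sqrt_mul hLf.le C
  rw [hsqrtLC]
  calc (1 / (T : ℝ)) * S ≤ (1 / (T : ℝ)) * (2 * (C₁ / γ) * (sL * sC) * sT) := by
        have : 0 ≤ 1 / (T : ℝ) := by positivity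
        exact mul_le_mul_of_nonneg_left hkey this
    _ = 2 * (C₁ / γ) * (sL * sC) / sT := by
        rw [← hsT2]; field_simp
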